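/- Let E be a directed graph and K a field. The path algebra KE is left noetherian if and only if E^0 ∪ E^1 is finite and every cycle in E has no entries (i.e., no edge e with r(e) a vertex of the cycle and e not an edge of the cycle). -/

import Mathlib

/-!
An infinite set of vertices `v₀, v₁, …` or of edges `e₀, e₁, …`, or an entry `e` into a cycle `c`,
gives paths `w₀, w₁, …` (the `vₖ`, the `eₖ`, or `e cᵏ`) such that the left ideals spanned by the
paths ending in one of `w₀, …, wₙ` increase strictly.

Conversely, when no cycle has an entry, each vertex is the base of at most one cycle, and every path
longer than `|E⁰|` begins with a cycle. Hence left multiplication by the sum of all cycles makes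
`KE` a `K[X]`-module generated by the finitely many short paths. Left ideals are `K[X]`-submodules,
so the ascending chain condition follows from Hilbert's basis theorem.
-/

/-- A directed graph: vertices, edges, source and range maps. -/
structure DGraph : Type 1 where
  V : Type
  Edge : Type
  s : Edge → V
  r : Edge → V

namespace DGraph

/-- A list of edges is composable if consecutive edges match up. -/
def IsComposable (G : DGraph) (l : List G.Edge) : Prop :=
  l.Chain' (fun e f => G.r e = G.s f)

/-- A path in `G`: either a trivial path at a vertex, or a nonempty composable list of edges. -/
def GPath (G : DGraph) : Type :=
  G.V ⊕ {l : List G.Edge // l ≠ [] ∧ G.IsComposable l}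

namespace GPath

variable {G : DGraph}

/-- The source of a path. -/
def src : GPath G → G.V
  | Sum.inl v => v
  | Sum.inr l => G.s (l.1.head l.2.1)

/-- The range of a path. -/
def rng : GPath G → G.V
  | Sum.inl v => v
  | Sum.inr l => G.r (l.1.getLast l.2.1)

/-- The length of a path. -/
def length : GPath G → ℕ
  | Sum.inl _ => 0
  | Sum.inr l => l.1.length

/-- The trivial path at a vertex. -/
def ofVertex (v : G.V) : GPath G := Sum.inl v

/-- The length-one path given by an edge. -/
def ofEdge (e : G.Edge) : GPath G :=
  Sum.inr ⟨[e], by simp [IsComposable]; exact List.isChain_singleton _⟩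

/-- Concatenation of composable paths. -/
def comp : (p q : GPath G) → p.rng = q.src → GPath G
  | Sum.inl _, q, _ => q
  | Sum.inr l, Sum.inl _, _ => Sum.inr l
  | Sum.inr l, Sum.inr m, h => Sum.inr ⟨l.1 ++ m.1, by
      refine ⟨by simp [l.2.1], l.2.2.append m.2.2 ?_⟩
      intro x hx y hy
      rw [List.getLast?_eq_some_getLast l.2.1] at hx
      rw [List.head?_eq_head m.2.1] at hy
      cases hx
      cases hy
      exact h⟩

end GPath

end DGraph

open DGraph

/-- A realization of the path algebra of the graph `G` over the field `K`:
a `K`-algebra with a basis indexed by the paths of `G`, multiplying by concatenation. -/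
structure PathAlgebraOn (K : Type) [Field K] (G : DGraph) (A : Type)
    [NonUnitalRing A] [Module K A] where
  basis : Module.Basis (GPath G) K A
  mul_comp : ∀ (p q : GPath G) (h : p.rng = q.src),
      basis p * basis q = basis (p.comp q h)
  mul_ncomp : ∀ p q : GPath G, p.rng ≠ q.src → basis p * basis q = 0

/-- A `K`-subspace of `A` which is a left ideal. -/
def IsLeftIdeal (K : Type) [Field K] (A : Type) [NonUnitalRing A] [Module K A]
    (S : Submodule K A) : Prop :=
  ∀ a : A, ∀ x ∈ S, a * x ∈ S

/-- A `K`-subspace of `A` which is a right ideal. -/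
def IsRightIdeal (K : Type) [Field K] (A : Type) [NonUnitalRing A] [Module K A]
    (S : Submodule K A) : Prop :=
  ∀ a : A, ∀ x ∈ S, x * a ∈ S

/-- The descending chain condition on left ideals. -/
def IsLeftArtinianAlg (K : Type) [Field K] (A : Type) [NonUnitalRing A] [Module K A] : Prop :=
  ∀ f : ℕ → Submodule K A, (∀ m, IsLeftIdeal K A (f m)) → (∀ m, f (m + 1) ≤ f m) →
    ∃ m, ∀ l, m ≤ l → f l = f m

/-- The ascending chain condition on left ideals. -/
def IsLeftNoetherianAlg (K : Type) [Field K] (A : Type) [NonUnitalRing A] [Module K A] : Prop :=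
  ∀ f : ℕ → Submodule K A, (∀ m, IsLeftIdeal K A (f m)) → (∀ m, f m ≤ f (m + 1)) →
    ∃ m, ∀ l, m ≤ l → f l = f m

/-- A minimal left ideal: nonzero, and containing no nonzero proper left subideal. -/
def IsMinimalLeftIdeal (K : Type) [Field K] (A : Type) [NonUnitalRing A] [Module K A]
    (S : Submodule K A) : Prop :=
  IsLeftIdeal K A S ∧ S ≠ ⊥ ∧
    ∀ T : Submodule K A, IsLeftIdeal K A T → T ≤ S → T = ⊥ ∨ T = S

/-- A minimal right ideal. -/
def IsMinimalRightIdeal (K : Type) [Field K] (A : Type) [NonUnitalRing A] [Module K A]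
    (S : Submodule K A) : Prop :=
  IsRightIdeal K A S ∧ S ≠ ⊥ ∧
    ∀ T : Submodule K A, IsRightIdeal K A T → T ≤ S → T = ⊥ ∨ T = S

/-- A cycle in `G`: a nonempty composable closed list of edges visiting pairwise
distinct vertices. -/
structure DGraph.IsCycleList (G : DGraph) (l : List G.Edge) : Prop where
  ne : l ≠ []
  comp : G.IsComposable l
  closed : G.r (l.getLast ne) = G.s (l.head ne)
  nodup : (l.map G.s).Nodup

/-- A cycle has an exit: an edge starting at a vertex of the cycle which is not the
corresponding cycle edge. -/
def DGraph.HasExit (G : DGraph) (l : List G.Edge) : Prop :=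
  ∃ e : G.Edge, ∃ f ∈ l, G.s e = G.s f ∧ e ≠ f

/-- A cycle has an entry: an edge ending at a vertex of the cycle which is not the
corresponding cycle edge. -/
def DGraph.HasEntry (G : DGraph) (l : List G.Edge) : Prop :=
  ∃ e : G.Edge, ∃ f ∈ l, G.r e = G.r f ∧ e ≠ f

/-- `G` is strongly connected: any two vertices are joined by a directed path. -/
def DGraph.StronglyConnected (G : DGraph) : Prop :=
  ∀ u v : G.V, ∃ p : DGraph.GPath G, p.src = u ∧ p.rng = v

open DGraph GPath Polynomial

theorem List.exists_append_cons_nodup_map_of_natCard_lt {α β : Type*} [Finite β] (f : α → β)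
    {l : List α} (hl : Nat.card β < l.length) :
    ∃ p a m, l = p ++ a :: m ∧ (p.map f).Nodup ∧ f a ∈ p.map f := by
  suffices h : ∀ acc : List α, (acc.map f).Nodup → Nat.card β < acc.length + l.length →
      ∃ p a m, l = p ++ a :: m ∧ ((acc ++ p).map f).Nodup ∧ f a ∈ (acc ++ p).map f by
    simpa using h [] List.nodup_nil (by simpa using hl)
  clear hl
  induction l with
  | nil =>
    intro acc hacc hlen
    have := hacc.length_le_natCard
    simp only [List.length_map, List.length_nil] at this hlen
    omega
  | cons a l ih =>
    intro acc hacc hlen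
    by_cases ha : f a ∈ acc.map f
    · exact ⟨[], a, l, rfl, by simpa using hacc, by simpa using ha⟩
    obtain ⟨p, b, m, rfl, hp, hb⟩ := ih (acc ++ [a])
      (by simpa using hacc.concat ha)
      (by simp only [List.length_append, List.length_cons] at hlen ⊢; omega)
    exact ⟨a :: p, b, m, rfl, by simpa using hp, by simpa using hb⟩

namespace DGraph.GPath

variable {G : DGraph}

def edges : GPath G → List G.Edge
  | Sum.inl _ => []
  | Sum.inr l => l.1

theorem edges_comp (p q : GPath G) (h : p.rng = q.src) :
    (p.comp q h).edges = p.edges ++ q.edges := by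
  rcases p with v | l <;> rcases q with w | m <;> simp [comp, edges]

theorem length_eq_length_edges (p : GPath G) : p.length = p.edges.length := by
  rcases p with v | l <;> rfl

theorem rng_comp (p q : GPath G) (h : p.rng = q.src) : (p.comp q h).rng = q.rng := by
  rcases p with v | l
  · rfl
  rcases q with w | m
  · exact h
  · simp [comp, rng, List.getLast_append_of_ne_nil _ m.2.1]

theorem isComposable_edges (p : GPath G) : G.IsComposable p.edges := by
  rcases p with v | l
  · exact List.IsChain.nil
  · exact l.2.2

theorem src_edges_injective : Function.Injective fun p : GPath G => (p.src, p.edges) := by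
  rintro (v | l) (w | m) h <;> simp only [Prod.mk.injEq, src, edges] at h
  · rw [h.1]
  · exact (m.2.1 h.2.symm).elim
  · exact (l.2.1 h.2).elim
  · exact congrArg Sum.inr (Subtype.ext h.2)

theorem finite_setOf_length_le [Finite G.V] [Finite G.Edge] (n : ℕ) :
    {p : GPath G | p.length ≤ n}.Finite :=
  ((Set.finite_univ.prod (List.finite_length_le G.Edge n)).preimage
    src_edges_injective.injOn).subset fun p hp => by
      simpa [length_eq_length_edges] using hp

theorem exists_comp_eq_of_edges_eq_append {p c : GPath G} {m : List G.Edge}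
    (hc : c.edges ≠ []) (hp : p.edges = c.edges ++ m) :
    ∃ q h, c.comp q h = p ∧ q.length = m.length := by
  rcases c with v | c
  · exact (hc rfl).elim
  rcases p with w | p
  · simp [edges] at hp
    exact (c.2.1 hp.1).elim
  simp only [edges] at hp
  rcases eq_or_ne m [] with rfl | hm
  · exact ⟨Sum.inl (G.r (c.1.getLast c.2.1)), rfl,
      congrArg Sum.inr (Subtype.ext (by simpa using hp.symm)), rfl⟩
  refine ⟨Sum.inr ⟨m, hm, p.2.2.suffix ⟨c.1, hp.symm⟩⟩, ?_, ?_, rfl⟩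
  · exact (hp ▸ p.2.2 : G.IsComposable (c.1 ++ m)).rel_getLast_head_of_append c.2.1 hm
  · exact congrArg Sum.inr (Subtype.ext hp.symm)

def IsLeftClosed (P : Set (GPath G)) : Prop :=
  ∀ (p q : GPath G) (h : p.rng = q.src), q ∈ P → p.comp q h ∈ P

theorem isLeftClosed_setOf_rng_eq (v : G.V) : IsLeftClosed {p : GPath G | p.rng = v} :=
  fun p q h hq => (rng_comp p q h).trans hq

theorem isLeftClosed_setOf_suffix (L : List G.Edge) :
    IsLeftClosed {p : GPath G | L <:+ p.edges} := fun p q h hq => by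
  simpa only [Set.mem_ofPred_eq, edges_comp] using hq.trans (List.suffix_append _ _)

end DGraph.GPath

namespace DGraph

variable {G : DGraph}

theorem IsCycleList.isComposable_flatten_replicate {l : List G.Edge}
    (hl : G.IsCycleList l) (k : ℕ) : G.IsComposable (List.replicate k l).flatten := by
  refine (List.isChain_flatten (by simp [hl.ne])).2 ⟨fun m hm => ?_, ?_⟩
  · rw [List.eq_of_mem_replicate hm]; exact hl.comp
  · refine List.isChain_replicate_of_rel k fun x hx y hy => ?_
    rw [List.getLast?_eq_some_getLast hl.ne, Option.mem_some_iff] at hx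
    rw [List.head?_eq_some_head hl.ne, Option.mem_some_iff] at hy
    subst hx hy
    exact hl.closed

theorem eq_of_not_hasEntry {l : List G.Edge} (hl : ¬ G.HasEntry l) {e f : G.Edge} (hf : f ∈ l)
    (h : G.r e = G.r f) : e = f := by
  by_contra hne
  exact hl ⟨e, f, hf, h, hne⟩

namespace IsCycleList

variable {l : List G.Edge}

/-- Walking backwards into a cycle without entries, one can only follow the cycle. -/
theorem suffix_of_isComposable_append (hl : G.IsCycleList l) (hH : ¬ G.HasEntry l)
    {q : List G.Edge} (hq : G.IsComposable (q ++ l)) (hlen : q.length ≤ l.length) : q <:+ l := by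
  induction q with
  | nil => exact List.nil_suffix
  | cons a q ih =>
    obtain ⟨u, rfl⟩ := ih (List.IsChain.tail hq) (by simp at hlen; omega)
    have hu : u ≠ [] := by rintro rfl; simp at hlen
    have hra : G.r a = G.s ((q ++ (u ++ q)).head (by simp [hu])) :=
      List.isChain_cons.1 hq |>.1 _ (List.head?_eq_some_head _)
    have hru : G.r (u.getLast hu) = G.s ((q ++ (u ++ q)).head (by simp [hu])) := by
      rcases eq_or_ne q [] with rfl | hq0
      · simpa using hl.closed
      · simpa [List.head_append_of_ne_nil hq0] using hl.comp.rel_getLast_head_of_append hu hq0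
    have ha : a = u.getLast hu :=
      eq_of_not_hasEntry hH (List.mem_append_left _ (List.getLast_mem hu)) (hra.trans hru.symm)
    subst ha
    exact ⟨u.dropLast, by simpa using congrArg (· ++ q) (List.dropLast_append_getLast hu)⟩

theorem eq_of_src_head_eq (hH : ∀ c, G.IsCycleList c → ¬ G.HasEntry c) {l' : List G.Edge}
    (hl : G.IsCycleList l) (hl' : G.IsCycleList l')
    (h : G.s (l.head hl.ne) = G.s (l'.head hl'.ne)) : l = l' := by
  wlog hle : l'.length ≤ l.length generalizing l l'
  · exact (this hl' hl h.symm (by omega)).symm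
  have hcomp : G.IsComposable (l' ++ l) := hl'.comp.append hl.comp fun x hx y hy => by
    rw [List.getLast?_eq_some_getLast hl'.ne, Option.mem_some_iff] at hx
    rw [List.head?_eq_some_head hl.ne, Option.mem_some_iff] at hy
    rw [← hx, ← hy, hl'.closed, h]
  obtain ⟨u, rfl⟩ := hl.suffix_of_isComposable_append (hH l hl) hcomp hle
  rcases eq_or_ne u [] with rfl | hu
  · rfl
  have hnodup := hl.nodup
  rw [List.map_append, List.nodup_append] at hnodup
  refine (hnodup.2.2 _ (List.mem_map_of_mem (List.head_mem hu)) _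
    (List.mem_map_of_mem (List.head_mem hl'.ne)) ?_).elim
  simpa [List.head_append_of_ne_nil hu] using h

end IsCycleList

/-- When no cycle has an entry, a path which visits more than `|V|` vertices starts with a cycle:
the first repeated vertex closes a cycle, and an edge leading into it would be an entry. -/
theorem exists_isCycleList_prefix [Finite G.V] (hH : ∀ c, G.IsCycleList c → ¬ G.HasEntry c)
    {m : List G.Edge} (hm : G.IsComposable m) (hlen : Nat.card G.V < m.length) :
    ∃ c m', m = c ++ m' ∧ G.IsCycleList c := by
  obtain ⟨p, a, m', rfl, hp, ha⟩ := List.exists_append_cons_nodup_map_of_natCard_lt G.s hlen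
  obtain ⟨b, hb, hba⟩ := List.mem_map.1 ha
  obtain ⟨q, t, rfl⟩ := List.append_of_mem hb
  rw [List.map_append, List.nodup_append] at hp
  have hc : G.IsCycleList (b :: t) := by
    refine ⟨List.cons_ne_nil _ _, hm.infix ⟨q, a :: m', by simp⟩, ?_, hp.2.1⟩
    have := (hm.suffix ⟨q, by simp⟩ : G.IsComposable ((b :: t) ++ a :: m'))
    simpa [hba] using this.rel_getLast_head_of_append (List.cons_ne_nil _ _) (List.cons_ne_nil _ _)
  rcases eq_or_ne q [] with rfl | hq
  · exact ⟨b :: t, a :: m', by simp, hc⟩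
  have hqb : G.r (q.getLast hq) = G.s b :=
    (hm.prefix ⟨a :: m', by simp⟩ : G.IsComposable (q ++ b :: t)).rel_getLast_head_of_append hq
      (List.cons_ne_nil _ _)
  have hentry := eq_of_not_hasEntry (hH _ hc) (List.getLast_mem (List.cons_ne_nil b t))
    (hqb.trans hc.closed.symm)
  exact absurd (congrArg G.s hentry) (hp.2.2 _ (List.mem_map_of_mem (List.getLast_mem hq)) _
    (List.mem_map_of_mem (List.getLast_mem _)))

def IsCycleList.toPath {l : List G.Edge} (hl : G.IsCycleList l) : GPath G :=
  Sum.inr ⟨l, hl.ne, hl.comp⟩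

instance [Finite G.Edge] : Finite {l // G.IsCycleList l} :=
  Set.Finite.to_subtype <| (List.finite_length_le G.Edge (Nat.card G.Edge)).subset fun _ hl =>
    (List.Nodup.of_map G.s hl.nodup).length_le_natCard

end DGraph

theorem Module.End.exists_eq_of_monotone_of_mem_invtSubmodule {R M : Type*} [CommRing R]
    [IsNoetherianRing R] [AddCommGroup M] [Module R M] (φ : Module.End R M)
    [Module.Finite R[X] (Module.AEval' φ)] (f : ℕ →o Submodule R M)
    (hf : ∀ n, f n ∈ φ.invtSubmodule) : ∃ n, ∀ m, n ≤ m → f n = f m := by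
  have : IsNoetherian R[X] (Module.AEval' φ) := isNoetherian_of_isNoetherianRing_of_finite _ _
  let e := Module.AEval.mapSubmodule R M φ
  obtain ⟨n, hn⟩ := monotone_stabilizes_iff_noetherian.2 this
    ⟨fun n => e ⟨f n, hf n⟩, fun i j hij => e.monotone (f.monotone hij)⟩
  exact ⟨n, fun m hm => congrArg Subtype.val (e.injective (hn m hm))⟩

namespace PathAlgebraOn

variable {K : Type} [Field K] {G : DGraph} {A : Type} [NonUnitalRing A] [Module K A]
  [SMulCommClass K A A]

section

variable [IsScalarTower K A A]

theorem isLeftIdeal_span_basis_image (PA : PathAlgebraOn K G A) {P : Set (GPath G)}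
    (hP : IsLeftClosed P) :
    IsLeftIdeal K A (Submodule.span K (PA.basis '' P)) := by
  have mul_basis_mem :
      ∀ q ∈ P, ∀ b : A, b * PA.basis q ∈ Submodule.span K (PA.basis '' P) := by
    intro q hq b
    induction PA.basis.mem_span b using Submodule.span_induction with
    | mem y hy =>
        obtain ⟨p, rfl⟩ := hy
        by_cases h : p.rng = q.src
        · rw [PA.mul_comp p q h]
          exact Submodule.subset_span ⟨_, hP p q h hq, rfl⟩
        · rw [PA.mul_ncomp p q h]
          exact zero_mem _
    | zero => simp
    | add y z _ _ hy hz => rw [add_mul]; exact add_mem hy hz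
    | smul c y _ hy => rw [smul_mul_assoc]; exact Submodule.smul_mem _ _ hy
  intro a x hx
  induction hx using Submodule.span_induction with
  | mem y hy => obtain ⟨q, hq, rfl⟩ := hy; exact mul_basis_mem q hq a
  | zero => simp
  | add y z _ _ hy hz => rw [mul_add]; exact add_mem hy hz
  | smul c y _ hy => rw [mul_smul_comm]; exact Submodule.smul_mem _ _ hy

/-- The left ideals spanned by `⋃ k < n, Q k` form a strictly ascending chain. -/
theorem not_isLeftNoetherianAlg (PA : PathAlgebraOn K G A) (Q : ℕ → Set (GPath G))
    (hQ : ∀ k, IsLeftClosed (Q k)) (w : ℕ → GPath G) (hw : ∀ k, w k ∈ Q k)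
    (hw_notMem : ∀ j k, j < k → w k ∉ Q j) :
    ¬ IsLeftNoetherianAlg K A := by
  intro hN
  let P : ℕ → Set (GPath G) := fun n => {p | ∃ k < n, p ∈ Q k}
  have hP : ∀ n, IsLeftClosed (P n) := fun n p q h ⟨k, hk, hq⟩ => ⟨k, hk, hQ k p q h hq⟩
  obtain ⟨n, hn⟩ := hN (fun n => Submodule.span K (PA.basis '' P n))
    (fun n => PA.isLeftIdeal_span_basis_image (hP n))
    (fun n => Submodule.span_mono (Set.image_mono fun p ⟨k, hk, hp⟩ => ⟨k, by omega, hp⟩))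
  have hwn : PA.basis (w n) ∈ Submodule.span K (PA.basis '' P n) :=
    hn (n + 1) n.le_succ ▸ Submodule.subset_span ⟨w n, ⟨n, n.lt_succ_self, hw n⟩, rfl⟩
  refine PA.basis.linearIndependent.notMem_span_image ?_ hwn
  rintro ⟨k, hk, hwk⟩
  exact hw_notMem k n hk hwk

theorem not_isLeftNoetherianAlg_of_infinite_vertices (PA : PathAlgebraOn K G A) [Infinite G.V] :
    ¬ IsLeftNoetherianAlg K A := by
  let g := Infinite.natEmbedding G.V
  refine PA.not_isLeftNoetherianAlg (fun k => {p | p.rng = g k})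
    (fun k => isLeftClosed_setOf_rng_eq _) (fun k => ofVertex (g k)) (fun k => rfl) ?_
  intro j k hjk hkj
  exact hjk.ne (g.injective hkj).symm

theorem not_isLeftNoetherianAlg_of_infinite_edges (PA : PathAlgebraOn K G A) [Infinite G.Edge] :
    ¬ IsLeftNoetherianAlg K A := by
  let g := Infinite.natEmbedding G.Edge
  refine PA.not_isLeftNoetherianAlg (fun k => {p | [g k] <:+ p.edges})
    (fun k => isLeftClosed_setOf_suffix _) (fun k => ofEdge (g k)) (fun k => List.suffix_refl _) ?_
  intro j k hjk hkj
  have := (hkj.eq_of_length rfl).symm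
  simp only [ofEdge, edges, List.cons.injEq, and_true] at this
  exact hjk.ne (g.injective this).symm

/-- The paths `wₖ = e l₂ lᵏ`, where `l = l₁ f l₂` and `e ≠ f` end at the same vertex: `wⱼ` is not a
suffix of `wₖ` for `j < k`, since `e` would then be the last edge `f` of `e l₂ lᵏ⁻ʲ⁻¹ l₁ f`. -/
theorem not_isLeftNoetherianAlg_of_hasEntry (PA : PathAlgebraOn K G A) {l : List G.Edge}
    (hl : G.IsCycleList l) (he : G.HasEntry l) : ¬ IsLeftNoetherianAlg K A := by
  obtain ⟨e, f, hf, hr, hne⟩ := he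
  obtain ⟨l₁, l₂, hl₁₂⟩ := List.append_of_mem hf
  let w : ℕ → List G.Edge := fun k => e :: (l₂ ++ (List.replicate k l).flatten)
  have hw : ∀ k, G.IsComposable (w k) := by
    intro k
    have hsuffix : f :: (l₂ ++ (List.replicate k l).flatten) <:+
        (List.replicate (k + 1) l).flatten :=
      ⟨l₁, by simp [List.replicate_succ, hl₁₂]⟩
    exact ((hl.isComposable_flatten_replicate (k + 1)).suffix hsuffix).imp_head
      (R := fun e f => G.r e = G.s f) hr.trans
  have hw_suffix : ∀ j k, j < k → ¬ w j <:+ w k := by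
    intro j k hjk hsuffix
    obtain ⟨n, rfl⟩ := Nat.exists_eq_add_of_lt hjk
    have hwk : w (j + n + 1) = ((e :: l₂ ++ (List.replicate n l).flatten ++ l₁) ++ [f]) ++
        (l₂ ++ (List.replicate j l).flatten) := by
      simp [w, show j + n + 1 = n + 1 + j by omega, List.replicate_add, List.replicate_succ', hl₁₂]
    rw [hwk, show w j = [e] ++ (l₂ ++ (List.replicate j l).flatten) from rfl,
      List.suffix_append_self_iff, List.singleton_suffix_iff_getLast?_eq_some,
      List.getLast?_concat, Option.some_inj] at hsuffix
    exact hne hsuffix.symm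
  exact PA.not_isLeftNoetherianAlg (fun k => {p | w k <:+ p.edges})
    (fun k => isLeftClosed_setOf_suffix _) (fun k => Sum.inr ⟨w k, List.cons_ne_nil _ _, hw k⟩)
    (fun k => List.suffix_refl _) hw_suffix

end

noncomputable def cycleMul (PA : PathAlgebraOn K G A) : Module.End K A :=
  LinearMap.mulLeft K (∑ᶠ c : {l // G.IsCycleList l}, PA.basis c.2.toPath)

/-- Without entries, a cycle is determined by its base vertex, so only one term of `cycleMul`
survives. -/
theorem cycleMul_basis (PA : PathAlgebraOn K G A) [Finite G.Edge]
    (hH : ∀ l, G.IsCycleList l → ¬ G.HasEntry l) {l : List G.Edge} (hl : G.IsCycleList l)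
    (p : GPath G) (h : hl.toPath.rng = p.src) :
    PA.cycleMul (PA.basis p) = PA.basis (hl.toPath.comp p h) := by
  rw [cycleMul, LinearMap.mulLeft_apply, finsum_mul' _ _ (Set.toFinite _),
    finsum_eq_single _ ⟨l, hl⟩]
  · exact PA.mul_comp _ _ h
  rintro ⟨l', hl'⟩ hne
  refine PA.mul_ncomp _ _ fun h' => hne (Subtype.ext (hl'.eq_of_src_head_eq hH hl ?_))
  exact hl'.closed.symm.trans (h'.trans (h.symm.trans hl.closed))

theorem aeval_cycleMul_basis_mem_span [Finite G.V] [Finite G.Edge] (PA : PathAlgebraOn K G A)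
    (hH : ∀ l, G.IsCycleList l → ¬ G.HasEntry l) (p : GPath G) :
    Module.AEval'.of PA.cycleMul (PA.basis p) ∈ Submodule.span K[X]
      (Module.AEval'.of PA.cycleMul '' (PA.basis '' {q | q.length ≤ Nat.card G.V})) := by
  induction hn : p.length using Nat.strong_induction_on generalizing p with
  | _ n ih =>
  by_cases hp : p.length ≤ Nat.card G.V
  · exact Submodule.subset_span ⟨_, ⟨p, hp, rfl⟩, rfl⟩
  obtain ⟨c, m, hcm, hc⟩ := exists_isCycleList_prefix hH p.isComposable_edges
    (by rw [← length_eq_length_edges]; omega)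
  obtain ⟨q, h, rfl, hq⟩ := exists_comp_eq_of_edges_eq_append (c := hc.toPath) hc.ne hcm
  have hlen : q.length < n := by
    rw [← hn, length_eq_length_edges (hc.toPath.comp q h), hcm, List.length_append, hq]
    have := List.length_pos_iff.2 hc.ne
    omega
  rw [← PA.cycleMul_basis hH hc q h, ← Module.AEval'.X_smul_of]
  exact Submodule.smul_mem _ _ (ih _ hlen q rfl)

theorem finite_aeval_cycleMul [Finite G.V] [Finite G.Edge] (PA : PathAlgebraOn K G A)
    (hH : ∀ l, G.IsCycleList l → ¬ G.HasEntry l) :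
    Module.Finite K[X] (Module.AEval' PA.cycleMul) := by
  let S := Module.AEval'.of PA.cycleMul '' (PA.basis '' {q | q.length ≤ Nat.card G.V})
  have hS : S.Finite := ((finite_setOf_length_le _).image _).image _
  refine ⟨⟨hS.toFinset, ?_⟩⟩
  rw [Set.Finite.coe_toFinset, eq_top_iff]
  rintro z -
  have hspan : Submodule.span K (Set.range PA.basis) ≤
      ((Submodule.span K[X] S).restrictScalars K).comap (Module.AEval'.of PA.cycleMul) :=
    Submodule.span_le.2 (by rintro _ ⟨p, rfl⟩; exact PA.aeval_cycleMul_basis_mem_span hH p)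
  rw [PA.basis.span_eq] at hspan
  simpa using hspan (Submodule.mem_top (x := (Module.AEval'.of PA.cycleMul).symm z))

theorem isLeftNoetherianAlg_of_forall_not_hasEntry [Finite G.V] [Finite G.Edge]
    (PA : PathAlgebraOn K G A) (hH : ∀ l, G.IsCycleList l → ¬ G.HasEntry l) :
    IsLeftNoetherianAlg K A := by
  intro f hf hmono
  have := PA.finite_aeval_cycleMul hH
  obtain ⟨n, hn⟩ := PA.cycleMul.exists_eq_of_monotone_of_mem_invtSubmodule
    ⟨f, monotone_nat_of_le_succ hmono⟩ fun n x hx => hf n _ x hx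
  exact ⟨n, fun m hm => (hn m hm).symm⟩

end PathAlgebraOn

/-- `KE` is left noetherian iff `E⁰ ∪ E¹` is finite and no cycle of `E`
has an entry. -/
theorem stmt17 (K : Type) [Field K] (G : DGraph)
    (A : Type) [NonUnitalRing A] [Module K A] [SMulCommClass K A A] [IsScalarTower K A A]
    (PA : PathAlgebraOn K G A) :
    IsLeftNoetherianAlg K A ↔
      (Finite G.V ∧ Finite G.Edge ∧
        ∀ l : List G.Edge, G.IsCycleList l → ¬ G.HasEntry l) := by
  refine ⟨fun hN => ⟨?_, ?_, fun l hl he => PA.not_isLeftNoetherianAlg_of_hasEntry hl he hN⟩,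
    fun ⟨_, _, hH⟩ => PA.isLeftNoetherianAlg_of_forall_not_hasEntry hH⟩
  · by_contra h
    rw [not_finite_iff_infinite] at h
    exact PA.not_isLeftNoetherianAlg_of_infinite_vertices hN
  · by_contra h
    rw [not_finite_iff_infinite] at h
    exact PA.not_isLeftNoetherianAlg_of_infinite_edges hN
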